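/- Let G be a finite simple graph, let S₁, …, S_k ⊆ V be anchor groups, and let γ be a positive integer. Then there exists a tree T in G with V(T) ∩ S_i ≠ ∅ for every i ∈ {1, …, k} and |V(T)| + |E(T)| ≤ γ (a Group Steiner tree of size at most γ), if and only if there exist a vertex v* ∈ V and a connected subgraph H of G with v* ∈ V(H), V(H) ∩ S_i ≠ ∅ for every i ∈ {1, …, k}, and Φ(H) ≥ 1/γ, where Φ is computed with respect to the value function assigning 1 to v* and 0 to every other vertex and every edge. -/

import Mathlib

/-!
For the value function `redVal v` with `v ∈ V(H)`, the numerator of `Φ(H)` is `1`, so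
`Φ(H) ≥ 1/γ` says exactly `|V(H)| + |E(H)| ≤ γ`. A tree is a connected subgraph, which gives one
direction. Conversely, a spanning tree `T` of a connected `H` has the same vertices and
`|V(H)| - 1 ≤ |E(H)|` edges, so it is no larger than `H` and meets the same anchor groups.
-/

open scoped BigOperators

/-- The information-density objective Φ of a subgraph `H`, given a value
function on vertices and on edges. -/
noncomputable def Phi {V : Type*} {G : SimpleGraph V} (H : G.Subgraph)
    (valV : V → ℝ) (valE : Sym2 V → ℝ) : ℝ :=
  ((∑ᶠ v ∈ H.verts, valV v) + ∑ᶠ e ∈ H.edgeSet, valE e) /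
    ((H.verts.ncard + H.edgeSet.ncard : ℕ) : ℝ)

/-- The reduction value function on vertices: `1` at `vstar`, `0` elsewhere. -/
noncomputable def redVal {V : Type*} [DecidableEq V] (vstar : V) : V → ℝ :=
  fun v => if v = vstar then 1 else 0

section RedVal

variable {V : Type*} [DecidableEq V] {G : SimpleGraph V}

lemma finsum_mem_redVal {s : Set V} {v : V} (hv : v ∈ s) :
    ∑ᶠ w ∈ s, redVal v w = 1 := by
  have hsupp : Function.support (redVal v) = {v} := by ext; simp [redVal]
  rw [← finsum_mem_inter_support, hsupp, Set.inter_singleton_of_mem hv,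
    finsum_mem_singleton, redVal, if_pos rfl]

lemma phi_redVal_of_mem {H : G.Subgraph} {v : V} (hv : v ∈ H.verts) :
    Phi H (redVal v) (fun _ => 0) = 1 / (H.verts.ncard + H.edgeSet.ncard : ℕ) := by
  rw [Phi, finsum_mem_redVal hv, finsum_mem_zero, add_zero]

lemma one_div_le_phi_redVal_iff {H : G.Subgraph} [Finite H.verts] {v : V}
    (hv : v ∈ H.verts) {γ : ℕ} (hγ : 0 < γ) :
    1 / (γ : ℝ) ≤ Phi H (redVal v) (fun _ => 0) ↔ H.verts.ncard + H.edgeSet.ncard ≤ γ := by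
  have hpos : 0 < H.verts.ncard := Set.ncard_pos (Set.toFinite _) |>.mpr ⟨v, hv⟩
  rw [phi_redVal_of_mem hv, one_div_le_one_div (by exact_mod_cast hγ) (by positivity),
    Nat.cast_le]

end RedVal

namespace SimpleGraph.Subgraph

variable {V : Type*} {G : SimpleGraph V}

lemma ncard_edgeSet_coe (H : G.Subgraph) : H.coe.edgeSet.ncard = H.edgeSet.ncard := by
  rw [← image_coe_edgeSet_coe, Set.ncard_image_of_injective _
    (Sym2.map.injective Subtype.val_injective)]

lemma Connected.ncard_verts_le_ncard_edgeSet_add_one {H : G.Subgraph} (hH : H.Connected) :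
    H.verts.ncard ≤ H.edgeSet.ncard + 1 := by
  simpa only [ncard_edgeSet_coe, Nat.card_coe_set_eq] using
    hH.coe.card_vert_le_card_edgeSet_add_one

lemma Connected.exists_spanning_tree {H : G.Subgraph} [Finite H.verts] (hH : H.Connected) :
    ∃ T : G.Subgraph, T.Connected ∧ T.verts = H.verts ∧ T.edgeSet.ncard + 1 = T.verts.ncard := by
  obtain ⟨T₀, hle, hT₀⟩ := hH.coe.exists_isTree_le
  have hverts : (H.coeSubgraph (H.coe.toSubgraph T₀ hle)).verts = H.verts := by simp
  refine ⟨_, (hT₀.connected.toSubgraph hle).coeSubgraph, hverts, ?_⟩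
  rw [edgeSet_map, Set.ncard_image_of_injective _ (Sym2.map.injective hom_injective), hverts,
    ← Nat.card_coe_set_eq, ← Nat.card_coe_set_eq]
  exact (isTree_iff_connected_and_card.mp hT₀).2

end SimpleGraph.Subgraph

theorem stmt_5 {V : Type*} [Fintype V] [DecidableEq V] (G : SimpleGraph V)
    (k : ℕ) (S : Fin k → Set V) (γ : ℕ) (hγ : 0 < γ) :
    (∃ T : G.Subgraph, T.Connected ∧ T.edgeSet.ncard = T.verts.ncard - 1 ∧
        (∀ i : Fin k, (T.verts ∩ S i).Nonempty) ∧
        T.verts.ncard + T.edgeSet.ncard ≤ γ) ↔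
      (∃ vstar : V, ∃ H : G.Subgraph, H.Connected ∧ vstar ∈ H.verts ∧
        (∀ i : Fin k, (H.verts ∩ S i).Nonempty) ∧
        Phi H (redVal vstar) (fun _ => 0) ≥ 1 / (γ : ℝ)) := by
  constructor
  · rintro ⟨T, hT, -, hhit, hsize⟩
    obtain ⟨vstar, hvstar⟩ := hT.nonempty
    exact ⟨vstar, T, hT, hvstar, hhit, (one_div_le_phi_redVal_iff hvstar hγ).mpr hsize⟩
  · rintro ⟨vstar, H, hH, hvstar, hhit, hphi⟩
    have hsize := (one_div_le_phi_redVal_iff hvstar hγ).mp hphi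
    have hedges := hH.ncard_verts_le_ncard_edgeSet_add_one
    obtain ⟨T, hT, hverts, htree⟩ := hH.exists_spanning_tree
    rw [← hverts] at hsize hedges hhit
    exact ⟨T, hT, by omega, hhit, by omega⟩
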